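/- arXiv:1407.0137 — 9 statements merged into one kernel-verified Lean document; each statement's English description precedes it below -/
import Mathlib

section
/- Suppose for every s the derivative X'(s) is nonzero, and define the distribution parameter P(s) = det(r'(s), X(s), X'(s)) / ‖X'(s)‖². Then under the RMF frame equations, for every s ∈ ℝ: P(s) = [(x₂(s)x₃'(s) − x₃(s)x₂'(s)) − κ(s)x₁(s)(x₂(s)sin θ(s) + x₃(s)cos θ(s))] / [(x₁'(s) − κ(s)x₂(s)cos θ(s) + κ(s)x₃(s)sin θ(s))² + (κ(s)x₁(s)cos θ(s) + x₂'(s))² + (x₃'(s) − κ(s)x₁(s)sin θ(s))²]. -/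
open Real
open scoped RealInnerProductSpace

/-- The cross product on `ℝ³ = EuclideanSpace ℝ (Fin 3)`. -/
noncomputable def cross3 (a b : EuclideanSpace ℝ (Fin 3)) : EuclideanSpace ℝ (Fin 3) :=
  WithLp.toLp 2 (crossProduct a b)

theorem rmf_distribution_parameter
    (r T U V : ℝ → EuclideanSpace ℝ (Fin 3)) (κ θ x₁ x₂ x₃ : ℝ → ℝ)
    (hr : ContDiff ℝ (⊤ : ℕ∞) r) (hκsm : ContDiff ℝ (⊤ : ℕ∞) κ) (hθsm : ContDiff ℝ (⊤ : ℕ∞) θ)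
    (hTsm : ContDiff ℝ (⊤ : ℕ∞) T) (hUsm : ContDiff ℝ (⊤ : ℕ∞) U) (hVsm : ContDiff ℝ (⊤ : ℕ∞) V)
    (hx₁sm : ContDiff ℝ (⊤ : ℕ∞) x₁) (hx₂sm : ContDiff ℝ (⊤ : ℕ∞) x₂) (hx₃sm : ContDiff ℝ (⊤ : ℕ∞) x₃)
    (hκpos : ∀ s, 0 < κ s)
    (hunit : ∀ s, ‖deriv r s‖ = 1)
    (hT : ∀ s, T s = deriv r s)
    (hTnorm : ∀ s, ‖T s‖ = 1) (hUnorm : ∀ s, ‖U s‖ = 1) (hVnorm : ∀ s, ‖V s‖ = 1)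
    (hTU : ∀ s, ⟪T s, U s⟫ = 0) (hTV : ∀ s, ⟪T s, V s⟫ = 0) (hUV : ∀ s, ⟪U s, V s⟫ = 0)
    (hTUV : ∀ s, cross3 (T s) (U s) = V s)
    (hUVT : ∀ s, cross3 (U s) (V s) = T s)
    (hVTU : ∀ s, cross3 (V s) (T s) = U s)
    (hT' : ∀ s, deriv T s = (κ s * Real.cos (θ s)) • U s - (κ s * Real.sin (θ s)) • V s)
    (hU' : ∀ s, deriv U s = (-(κ s * Real.cos (θ s))) • T s)
    (hV' : ∀ s, deriv V s = (κ s * Real.sin (θ s)) • T s)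
    (X : ℝ → EuclideanSpace ℝ (Fin 3))
    (hX : ∀ s, X s = x₁ s • T s + x₂ s • U s + x₃ s • V s)
    (hX' : ∀ s, deriv X s ≠ 0)
    (P : ℝ → ℝ)
    (hP : ∀ s, P s = ⟪cross3 (deriv r s) (X s), deriv X s⟫ / ‖deriv X s‖ ^ 2)
    : ∀ s : ℝ, P s =
      ((x₂ s * deriv x₃ s - x₃ s * deriv x₂ s)
        - κ s * x₁ s * (x₂ s * Real.sin (θ s) + x₃ s * Real.cos (θ s)))
      / ((deriv x₁ s - κ s * x₂ s * Real.cos (θ s) + κ s * x₃ s * Real.sin (θ s)) ^ 2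
        + (κ s * x₁ s * Real.cos (θ s) + deriv x₂ s) ^ 2
        + (deriv x₃ s - κ s * x₁ s * Real.sin (θ s)) ^ 2) := by
  intro s
  have hTd := (hTsm.differentiable (by simp))
  have hUd := (hUsm.differentiable (by simp))
  have hVd := (hVsm.differentiable (by simp))
  have h1d := (hx₁sm.differentiable (by simp))
  have h2d := (hx₂sm.differentiable (by simp))
  have h3d := (hx₃sm.differentiable (by simp))
  -- derivative of X
  have hXd : deriv X s =
      (deriv x₁ s - κ s * x₂ s * Real.cos (θ s) + κ s * x₃ s * Real.sin (θ s)) • T s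
      + (κ s * x₁ s * Real.cos (θ s) + deriv x₂ s) • U s
      + (deriv x₃ s - κ s * x₁ s * Real.sin (θ s)) • V s := by
    have h : HasDerivAt X
        ((x₁ s • deriv T s + deriv x₁ s • T s)
          + (x₂ s • deriv U s + deriv x₂ s • U s)
          + (x₃ s • deriv V s + deriv x₃ s • V s)) s := by
      have := (((h1d s).hasDerivAt.smul (hTd s).hasDerivAt).add
        ((h2d s).hasDerivAt.smul (hUd s).hasDerivAt)).add
        ((h3d s).hasDerivAt.smul (hVd s).hasDerivAt)
      exact (this.congr_of_eventuallyEq (Filter.Eventually.of_forall fun t => (hX t)))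
    rw [h.deriv, hT' s, hU' s, hV' s]
    module
  have hTC : deriv r s = T s := (hT s).symm
  -- cross product
  have hc : cross3 (deriv r s) (X s) = x₂ s • V s - x₃ s • U s := by
    rw [hTC, hX s]
    show WithLp.toLp 2 (crossProduct (T s).ofLp (x₁ s • T s + x₂ s • U s + x₃ s • V s).ofLp) = _
    have hTV3 : crossProduct (T s).ofLp (V s).ofLp = - (U s).ofLp := by
      rw [← cross_anticomm (V s).ofLp (T s).ofLp]
      have h2 : crossProduct (V s).ofLp (T s).ofLp = (U s).ofLp := congrArg WithLp.ofLp (hVTU s)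
      simp [h2]
    have hTU3 : crossProduct (T s).ofLp (U s).ofLp = (V s).ofLp := congrArg WithLp.ofLp (hTUV s)
    rw [WithLp.ofLp_add, WithLp.ofLp_add, WithLp.ofLp_smul, WithLp.ofLp_smul, WithLp.ofLp_smul,
      map_add, map_add, map_smul, map_smul, map_smul, cross_self, hTU3, hTV3]
    apply WithLp.ofLp_injective 2
    simp only [WithLp.ofLp_toLp, WithLp.ofLp_sub, WithLp.ofLp_smul]
    module
  -- inner products between frame vectors
  have iTT : ⟪T s, T s⟫ = 1 := by
    rw [real_inner_self_eq_norm_sq, hTnorm s]; norm_num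
  have iUU : ⟪U s, U s⟫ = 1 := by
    rw [real_inner_self_eq_norm_sq, hUnorm s]; norm_num
  have iVV : ⟪V s, V s⟫ = 1 := by
    rw [real_inner_self_eq_norm_sq, hVnorm s]; norm_num
  have iUT : ⟪U s, T s⟫ = 0 := by rw [real_inner_comm]; exact hTU s
  have iVT : ⟪V s, T s⟫ = 0 := by rw [real_inner_comm]; exact hTV s
  have iVU : ⟪V s, U s⟫ = 0 := by rw [real_inner_comm]; exact hUV s
  set a := deriv x₁ s - κ s * x₂ s * Real.cos (θ s) + κ s * x₃ s * Real.sin (θ s) with ha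
  set b := κ s * x₁ s * Real.cos (θ s) + deriv x₂ s with hb
  set c := deriv x₃ s - κ s * x₁ s * Real.sin (θ s) with hc2
  have hnum : ⟪cross3 (deriv r s) (X s), deriv X s⟫ = x₂ s * c - x₃ s * b := by
    rw [hc, hXd]
    simp only [inner_sub_left, inner_add_right, inner_smul_left, inner_smul_right,
      real_inner_smul_left, real_inner_smul_right, iTT, iUU, iVV, iUT, iVT, iVU,
      hTU s, hTV s, hUV s, conj_trivial]
    ring
  have hden : ‖deriv X s‖ ^ 2 = a ^ 2 + b ^ 2 + c ^ 2 := by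
    rw [← real_inner_self_eq_norm_sq, hXd]
    simp only [inner_add_left, inner_add_right, real_inner_smul_left, real_inner_smul_right,
      iTT, iUU, iVV, iUT, iVT, iVU, hTU s, hTV s, hUV s, conj_trivial]
    ring
  rw [hP s, hnum, hden, ha, hb, hc2]
  congr 1
  ring
end

section
/- Assume x₂(s)² + x₃(s)² ≠ 0 and let N̄(s) = (x₂(s)V(s) − x₃(s)U(s))/√(x₂(s)² + x₃(s)²). Then the geodesic curvature of the base curve, k_g(s) = ⟪N̄(s) × T(s), T'(s)⟫, satisfies k_g(s) = κ(s)(x₂(s)cos θ(s) − x₃(s)sin θ(s))/√(x₂(s)² + x₃(s)²). -/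
open Real
open scoped RealInnerProductSpace

theorem rmf_geodesic_curvature
    (r T U V : ℝ → EuclideanSpace ℝ (Fin 3)) (κ θ x₁ x₂ x₃ : ℝ → ℝ)
    (hr : ContDiff ℝ (⊤ : ℕ∞) r) (hκsm : ContDiff ℝ (⊤ : ℕ∞) κ) (hθsm : ContDiff ℝ (⊤ : ℕ∞) θ)
    (hTsm : ContDiff ℝ (⊤ : ℕ∞) T) (hUsm : ContDiff ℝ (⊤ : ℕ∞) U) (hVsm : ContDiff ℝ (⊤ : ℕ∞) V)
    (hx₁sm : ContDiff ℝ (⊤ : ℕ∞) x₁) (hx₂sm : ContDiff ℝ (⊤ : ℕ∞) x₂) (hx₃sm : ContDiff ℝ (⊤ : ℕ∞) x₃)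
    (hκpos : ∀ s, 0 < κ s)
    (hunit : ∀ s, ‖deriv r s‖ = 1)
    (hT : ∀ s, T s = deriv r s)
    (hTnorm : ∀ s, ‖T s‖ = 1) (hUnorm : ∀ s, ‖U s‖ = 1) (hVnorm : ∀ s, ‖V s‖ = 1)
    (hTU : ∀ s, ⟪T s, U s⟫ = 0) (hTV : ∀ s, ⟪T s, V s⟫ = 0) (hUV : ∀ s, ⟪U s, V s⟫ = 0)
    (hTUV : ∀ s, cross3 (T s) (U s) = V s)
    (hUVT : ∀ s, cross3 (U s) (V s) = T s)
    (hVTU : ∀ s, cross3 (V s) (T s) = U s)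
    (hT' : ∀ s, deriv T s = (κ s * Real.cos (θ s)) • U s - (κ s * Real.sin (θ s)) • V s)
    (hU' : ∀ s, deriv U s = (-(κ s * Real.cos (θ s))) • T s)
    (hV' : ∀ s, deriv V s = (κ s * Real.sin (θ s)) • T s)
    (X : ℝ → EuclideanSpace ℝ (Fin 3))
    (hX : ∀ s, X s = x₁ s • T s + x₂ s • U s + x₃ s • V s)
    (hne : ∀ s, x₂ s ^ 2 + x₃ s ^ 2 ≠ 0)
    (Nb : ℝ → EuclideanSpace ℝ (Fin 3))
    (hNb : ∀ s, Nb s = (Real.sqrt (x₂ s ^ 2 + x₃ s ^ 2))⁻¹ • (x₂ s • V s - x₃ s • U s))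
    : ∀ s : ℝ, ⟪cross3 (Nb s) (T s), deriv T s⟫
      = κ s * (x₂ s * Real.cos (θ s) - x₃ s * Real.sin (θ s)) / Real.sqrt (x₂ s ^ 2 + x₃ s ^ 2) := by
  intro s
  have hUT : cross3 (U s) (T s) = -V s := by
    rw [← hTUV s]; unfold cross3; rw [← cross_anticomm, WithLp.toLp_neg]
  have hcross : cross3 (Nb s) (T s)
      = (Real.sqrt (x₂ s ^ 2 + x₃ s ^ 2))⁻¹ • (x₂ s • U s + x₃ s • V s) := by
    have : cross3 (x₂ s • V s - x₃ s • U s) (T s)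
        = x₂ s • cross3 (V s) (T s) - x₃ s • cross3 (U s) (T s) := by
      unfold cross3
      rw [WithLp.ofLp_sub, WithLp.ofLp_smul, WithLp.ofLp_smul,
        map_sub, map_smul, map_smul, LinearMap.sub_apply, LinearMap.smul_apply,
        LinearMap.smul_apply, WithLp.toLp_sub, WithLp.toLp_smul, WithLp.toLp_smul]
    rw [hNb s]
    have h2 : cross3 ((Real.sqrt (x₂ s ^ 2 + x₃ s ^ 2))⁻¹ • (x₂ s • V s - x₃ s • U s)) (T s)
        = (Real.sqrt (x₂ s ^ 2 + x₃ s ^ 2))⁻¹ • cross3 (x₂ s • V s - x₃ s • U s) (T s) := by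
      unfold cross3
      rw [WithLp.ofLp_smul, map_smul, LinearMap.smul_apply, WithLp.toLp_smul]
    rw [h2, this, hVTU s, hUT]
    congr 1
    rw [smul_neg, sub_neg_eq_add]
  rw [hcross, hT' s]
  have hUU : ⟪U s, U s⟫ = 1 := by
    rw [real_inner_self_eq_norm_sq, hUnorm s]; norm_num
  have hVV : ⟪V s, V s⟫ = 1 := by
    rw [real_inner_self_eq_norm_sq, hVnorm s]; norm_num
  have hVU : ⟪V s, U s⟫ = (0:ℝ) := by rw [real_inner_comm]; exact hUV s
  rw [real_inner_smul_left, inner_sub_right, inner_add_left, inner_add_left,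
    real_inner_smul_left, real_inner_smul_left, real_inner_smul_right,
    real_inner_smul_right, real_inner_smul_left, real_inner_smul_left,
    real_inner_smul_right, real_inner_smul_right, hUU, hVV, hUV s, hVU]
  ring
end

section
/- Assume x₂(s)² + x₃(s)² ≠ 0 and let N̄(s) = (x₂(s)V(s) − x₃(s)U(s))/√(x₂(s)² + x₃(s)²). Then the normal curvature of the base curve, k_n(s) = ⟪r''(s), N̄(s)⟫, satisfies k_n(s) = −κ(s)(x₃(s)cos θ(s) + x₂(s)sin θ(s))/√(x₂(s)² + x₃(s)²). -/
open Real
open scoped RealInnerProductSpace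

theorem rmf_normal_curvature
    (r T U V : ℝ → EuclideanSpace ℝ (Fin 3)) (κ θ x₁ x₂ x₃ : ℝ → ℝ)
    (hr : ContDiff ℝ (⊤ : ℕ∞) r) (hκsm : ContDiff ℝ (⊤ : ℕ∞) κ) (hθsm : ContDiff ℝ (⊤ : ℕ∞) θ)
    (hTsm : ContDiff ℝ (⊤ : ℕ∞) T) (hUsm : ContDiff ℝ (⊤ : ℕ∞) U) (hVsm : ContDiff ℝ (⊤ : ℕ∞) V)
    (hx₁sm : ContDiff ℝ (⊤ : ℕ∞) x₁) (hx₂sm : ContDiff ℝ (⊤ : ℕ∞) x₂) (hx₃sm : ContDiff ℝ (⊤ : ℕ∞) x₃)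
    (hκpos : ∀ s, 0 < κ s)
    (hunit : ∀ s, ‖deriv r s‖ = 1)
    (hT : ∀ s, T s = deriv r s)
    (hTnorm : ∀ s, ‖T s‖ = 1) (hUnorm : ∀ s, ‖U s‖ = 1) (hVnorm : ∀ s, ‖V s‖ = 1)
    (hTU : ∀ s, ⟪T s, U s⟫ = 0) (hTV : ∀ s, ⟪T s, V s⟫ = 0) (hUV : ∀ s, ⟪U s, V s⟫ = 0)
    (hTUV : ∀ s, cross3 (T s) (U s) = V s)
    (hUVT : ∀ s, cross3 (U s) (V s) = T s)
    (hVTU : ∀ s, cross3 (V s) (T s) = U s)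
    (hT' : ∀ s, deriv T s = (κ s * Real.cos (θ s)) • U s - (κ s * Real.sin (θ s)) • V s)
    (hU' : ∀ s, deriv U s = (-(κ s * Real.cos (θ s))) • T s)
    (hV' : ∀ s, deriv V s = (κ s * Real.sin (θ s)) • T s)
    (X : ℝ → EuclideanSpace ℝ (Fin 3))
    (hX : ∀ s, X s = x₁ s • T s + x₂ s • U s + x₃ s • V s)
    (hne : ∀ s, x₂ s ^ 2 + x₃ s ^ 2 ≠ 0)
    (Nb : ℝ → EuclideanSpace ℝ (Fin 3))
    (hNb : ∀ s, Nb s = (Real.sqrt (x₂ s ^ 2 + x₃ s ^ 2))⁻¹ • (x₂ s • V s - x₃ s • U s))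
    : ∀ s : ℝ, ⟪deriv (deriv r) s, Nb s⟫
      = -(κ s * (x₃ s * Real.cos (θ s) + x₂ s * Real.sin (θ s))) / Real.sqrt (x₂ s ^ 2 + x₃ s ^ 2) := by
  intro s
  have hTr : T = deriv r := funext hT
  have hdd : deriv (deriv r) s = deriv T s := by rw [← hTr]
  have hUU : ⟪U s, U s⟫ = 1 := by
    rw [real_inner_self_eq_norm_sq, hUnorm]; norm_num
  have hVV : ⟪V s, V s⟫ = 1 := by
    rw [real_inner_self_eq_norm_sq, hVnorm]; norm_num
  have hVU : ⟪V s, U s⟫ = 0 := by rw [real_inner_comm]; exact hUV s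
  rw [hdd, hT' s, hNb s]
  simp only [inner_smul_left, inner_smul_right, inner_sub_left, inner_sub_right,
    hUU, hVV, hUV s, hVU, conj_trivial]
  field_simp
  ring
end

section
/- Assume x₂(s)² + x₃(s)² ≠ 0 for all s and let N̄(s) = (x₂(s)V(s) − x₃(s)U(s))/√(x₂(s)² + x₃(s)²). Then the geodesic torsion of the base curve, τ_g(s) = ⟪N̄(s) × N̄'(s), T'(s)⟫, satisfies τ_g(s) = −(κ(s)²/(x₂(s)² + x₃(s)²))·(½ sin 2θ(s)·(x₃(s)² − x₂(s)²) − cos 2θ(s)·x₂(s)x₃(s)). -/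
open Real
open scoped RealInnerProductSpace

lemma cross3_add_left (a b c : EuclideanSpace ℝ (Fin 3)) :
    cross3 (a + b) c = cross3 a c + cross3 b c := by
  simp [cross3, map_add, LinearMap.add_apply]

lemma cross3_sub_left (a b c : EuclideanSpace ℝ (Fin 3)) :
    cross3 (a - b) c = cross3 a c - cross3 b c := by
  simp [cross3, map_sub, LinearMap.sub_apply]

lemma cross3_smul_left (t : ℝ) (a c : EuclideanSpace ℝ (Fin 3)) :
    cross3 (t • a) c = t • cross3 a c := by
  simp [cross3, map_smul, LinearMap.smul_apply]

lemma cross3_add_right (a b c : EuclideanSpace ℝ (Fin 3)) :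
    cross3 a (b + c) = cross3 a b + cross3 a c := by
  simp [cross3, map_add]

lemma cross3_sub_right (a b c : EuclideanSpace ℝ (Fin 3)) :
    cross3 a (b - c) = cross3 a b - cross3 a c := by
  simp [cross3, map_sub]

lemma cross3_smul_right (t : ℝ) (a c : EuclideanSpace ℝ (Fin 3)) :
    cross3 a (t • c) = t • cross3 a c := by
  simp [cross3, map_smul]

lemma cross3_anticomm (a b : EuclideanSpace ℝ (Fin 3)) :
    cross3 a b = -cross3 b a := by
  simp only [cross3]
  rw [← cross_anticomm b a, WithLp.toLp_neg]

lemma cross3_self (a : EuclideanSpace ℝ (Fin 3)) : cross3 a a = 0 := by simp [cross3]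

theorem rmf_geodesic_torsion
    (r T U V : ℝ → EuclideanSpace ℝ (Fin 3)) (κ θ x₁ x₂ x₃ : ℝ → ℝ)
    (hr : ContDiff ℝ (⊤ : ℕ∞) r) (hκsm : ContDiff ℝ (⊤ : ℕ∞) κ) (hθsm : ContDiff ℝ (⊤ : ℕ∞) θ)
    (hTsm : ContDiff ℝ (⊤ : ℕ∞) T) (hUsm : ContDiff ℝ (⊤ : ℕ∞) U) (hVsm : ContDiff ℝ (⊤ : ℕ∞) V)
    (hx₁sm : ContDiff ℝ (⊤ : ℕ∞) x₁) (hx₂sm : ContDiff ℝ (⊤ : ℕ∞) x₂) (hx₃sm : ContDiff ℝ (⊤ : ℕ∞) x₃)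
    (hκpos : ∀ s, 0 < κ s)
    (hunit : ∀ s, ‖deriv r s‖ = 1)
    (hT : ∀ s, T s = deriv r s)
    (hTnorm : ∀ s, ‖T s‖ = 1) (hUnorm : ∀ s, ‖U s‖ = 1) (hVnorm : ∀ s, ‖V s‖ = 1)
    (hTU : ∀ s, ⟪T s, U s⟫ = 0) (hTV : ∀ s, ⟪T s, V s⟫ = 0) (hUV : ∀ s, ⟪U s, V s⟫ = 0)
    (hTUV : ∀ s, cross3 (T s) (U s) = V s)
    (hUVT : ∀ s, cross3 (U s) (V s) = T s)
    (hVTU : ∀ s, cross3 (V s) (T s) = U s)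
    (hT' : ∀ s, deriv T s = (κ s * Real.cos (θ s)) • U s - (κ s * Real.sin (θ s)) • V s)
    (hU' : ∀ s, deriv U s = (-(κ s * Real.cos (θ s))) • T s)
    (hV' : ∀ s, deriv V s = (κ s * Real.sin (θ s)) • T s)
    (X : ℝ → EuclideanSpace ℝ (Fin 3))
    (hX : ∀ s, X s = x₁ s • T s + x₂ s • U s + x₃ s • V s)
    (hne : ∀ s, x₂ s ^ 2 + x₃ s ^ 2 ≠ 0)
    (Nb : ℝ → EuclideanSpace ℝ (Fin 3))
    (hNb : ∀ s, Nb s = (Real.sqrt (x₂ s ^ 2 + x₃ s ^ 2))⁻¹ • (x₂ s • V s - x₃ s • U s))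
    : ∀ s : ℝ, ⟪cross3 (Nb s) (deriv Nb s), deriv T s⟫
      = -(κ s ^ 2 / (x₂ s ^ 2 + x₃ s ^ 2))
        * ((1 / 2) * Real.sin (2 * θ s) * (x₃ s ^ 2 - x₂ s ^ 2)
          - Real.cos (2 * θ s) * (x₂ s * x₃ s)) := by
  intro s
  have hq : (0:ℝ) < x₂ s ^ 2 + x₃ s ^ 2 :=
    lt_of_le_of_ne (by positivity) (Ne.symm (hne s))
  have hsq : Real.sqrt (x₂ s ^ 2 + x₃ s ^ 2) ≠ 0 := ne_of_gt (Real.sqrt_pos.2 hq)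
  have hx₂d : Differentiable ℝ x₂ := hx₂sm.differentiable (by simp)
  have hx₃d : Differentiable ℝ x₃ := hx₃sm.differentiable (by simp)
  have hUd : Differentiable ℝ U := hUsm.differentiable (by simp)
  have hVd : Differentiable ℝ V := hVsm.differentiable (by simp)
  have hgd : DifferentiableAt ℝ (fun t => x₂ t ^ 2 + x₃ t ^ 2) s :=
    ((hx₂d s).pow 2).add ((hx₃d s).pow 2)
  have hfd : DifferentiableAt ℝ (fun t => (Real.sqrt (x₂ t ^ 2 + x₃ t ^ 2))⁻¹) s :=
    (hgd.sqrt (hne s)).inv hsq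
  have hFd : DifferentiableAt ℝ (fun t => x₂ t • V t - x₃ t • U t) s :=
    ((hx₂d s).smul (hVd s)).sub ((hx₃d s).smul (hUd s))
  have hNb' : Nb = fun t => (Real.sqrt (x₂ t ^ 2 + x₃ t ^ 2))⁻¹ • (x₂ t • V t - x₃ t • U t) :=
    funext hNb
  have hdF : deriv (fun t => x₂ t • V t - x₃ t • U t) s
      = (x₂ s • deriv V s + deriv x₂ s • V s) - (x₃ s • deriv U s + deriv x₃ s • U s) := by
    rw [deriv_fun_sub (f := fun t => x₂ t • V t) (g := fun t => x₃ t • U t) ((hx₂d s).smul (hVd s)) ((hx₃d s).smul (hUd s)),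
      deriv_fun_smul (hx₂d s) (hVd s), deriv_fun_smul (hx₃d s) (hUd s)]
  have hdNb : deriv Nb s
      = (Real.sqrt (x₂ s ^ 2 + x₃ s ^ 2))⁻¹ •
          ((x₂ s • deriv V s + deriv x₂ s • V s) - (x₃ s • deriv U s + deriv x₃ s • U s))
        + (deriv (fun t => (Real.sqrt (x₂ t ^ 2 + x₃ t ^ 2))⁻¹) s) •
            (x₂ s • V s - x₃ s • U s) := by
    rw [hNb', deriv_fun_smul hfd hFd, hdF]
  have hTT : ⟪T s, T s⟫ = 1 := by
    rw [real_inner_self_eq_norm_sq, hTnorm s]; norm_num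
  have hUT : ⟪U s, T s⟫ = 0 := by rw [real_inner_comm]; exact hTU s
  have hVT : ⟪V s, T s⟫ = 0 := by rw [real_inner_comm]; exact hTV s
  have hVU : ⟪V s, U s⟫ = 0 := by rw [real_inner_comm]; exact hUV s
  have hUU : ⟪U s, U s⟫ = 1 := by
    rw [real_inner_self_eq_norm_sq, hUnorm s]; norm_num
  have hVV : ⟪V s, V s⟫ = 1 := by
    rw [real_inner_self_eq_norm_sq, hVnorm s]; norm_num
  have hUT3 : cross3 (U s) (T s) = -V s := by
    rw [cross3_anticomm, hTUV s]
  have hVU3 : cross3 (V s) (U s) = -T s := by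
    rw [cross3_anticomm, hUVT s]
  have hTV3 : cross3 (T s) (V s) = -U s := by
    rw [cross3_anticomm, hVTU s]
  rw [hdNb, hNb s, hT' s, hU' s, hV' s]
  simp only [smul_smul, cross3_add_left, cross3_sub_left, cross3_smul_left,
    cross3_add_right, cross3_sub_right, cross3_smul_right,
    hTUV s, hUVT s, hVTU s, hUT3, hVU3, hTV3, cross3_self,
    smul_neg, smul_zero, neg_zero,
    inner_add_left, inner_sub_left, real_inner_smul_left,
    inner_add_right, inner_sub_right, real_inner_smul_right,
    inner_neg_left, inner_neg_right, inner_zero_left, inner_zero_right,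
    hTT, hUU, hVV, hTU s, hTV s, hUV s, hUT, hVT, hVU]
  have hinv : (Real.sqrt (x₂ s ^ 2 + x₃ s ^ 2))⁻¹ * (Real.sqrt (x₂ s ^ 2 + x₃ s ^ 2))⁻¹
      = (x₂ s ^ 2 + x₃ s ^ 2)⁻¹ := by
    rw [← mul_inv, Real.mul_self_sqrt hq.le]
  rw [Real.sin_two_mul, Real.cos_two_mul']
  field_simp
  rw [Real.sq_sqrt hq.le]
  ring
end

section
/- (Theorem 1) Fix s with x₂(s)² + x₃(s)² ≠ 0 and let N̄(s) = (x₂(s)V(s) − x₃(s)U(s))/√(x₂(s)² + x₃(s)²) and k_g(s) = ⟪N̄(s) × T(s), T'(s)⟫. Then k_g(s) = 0 if and only if x₂(s)cos θ(s) = x₃(s)sin θ(s); in particular, if x₃(s) ≠ 0 and cos θ(s) ≠ 0, then the base curve has vanishing geodesic curvature at s if and only if tan θ(s) = x₂(s)/x₃(s). -/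
open Real
open scoped RealInnerProductSpace

theorem rmf_geodesic_iff
    (r T U V : ℝ → EuclideanSpace ℝ (Fin 3)) (κ θ x₁ x₂ x₃ : ℝ → ℝ)
    (hr : ContDiff ℝ (⊤ : ℕ∞) r) (hκsm : ContDiff ℝ (⊤ : ℕ∞) κ) (hθsm : ContDiff ℝ (⊤ : ℕ∞) θ)
    (hTsm : ContDiff ℝ (⊤ : ℕ∞) T) (hUsm : ContDiff ℝ (⊤ : ℕ∞) U) (hVsm : ContDiff ℝ (⊤ : ℕ∞) V)
    (hx₁sm : ContDiff ℝ (⊤ : ℕ∞) x₁) (hx₂sm : ContDiff ℝ (⊤ : ℕ∞) x₂) (hx₃sm : ContDiff ℝ (⊤ : ℕ∞) x₃)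
    (hκpos : ∀ s, 0 < κ s)
    (hunit : ∀ s, ‖deriv r s‖ = 1)
    (hT : ∀ s, T s = deriv r s)
    (hTnorm : ∀ s, ‖T s‖ = 1) (hUnorm : ∀ s, ‖U s‖ = 1) (hVnorm : ∀ s, ‖V s‖ = 1)
    (hTU : ∀ s, ⟪T s, U s⟫ = 0) (hTV : ∀ s, ⟪T s, V s⟫ = 0) (hUV : ∀ s, ⟪U s, V s⟫ = 0)
    (hTUV : ∀ s, cross3 (T s) (U s) = V s)
    (hUVT : ∀ s, cross3 (U s) (V s) = T s)
    (hVTU : ∀ s, cross3 (V s) (T s) = U s)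
    (hT' : ∀ s, deriv T s = (κ s * Real.cos (θ s)) • U s - (κ s * Real.sin (θ s)) • V s)
    (hU' : ∀ s, deriv U s = (-(κ s * Real.cos (θ s))) • T s)
    (hV' : ∀ s, deriv V s = (κ s * Real.sin (θ s)) • T s)
    (X : ℝ → EuclideanSpace ℝ (Fin 3))
    (hX : ∀ s, X s = x₁ s • T s + x₂ s • U s + x₃ s • V s)
    (s : ℝ) (hne : x₂ s ^ 2 + x₃ s ^ 2 ≠ 0)
    (kg : ℝ)
    (hkg : kg = ⟪cross3 ((Real.sqrt (x₂ s ^ 2 + x₃ s ^ 2))⁻¹ • (x₂ s • V s - x₃ s • U s)) (T s),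
      deriv T s⟫)
    : (kg = 0 ↔ x₂ s * Real.cos (θ s) = x₃ s * Real.sin (θ s))
      ∧ (x₃ s ≠ 0 → Real.cos (θ s) ≠ 0 →
        (kg = 0 ↔ Real.tan (θ s) = x₂ s / x₃ s)) := by

  set c : ℝ := Real.sqrt (x₂ s ^ 2 + x₃ s ^ 2) with hc
  have hcpos : 0 < c := Real.sqrt_pos.mpr (lt_of_le_of_ne (by positivity) (Ne.symm hne))
  have hUT : cross3 (U s) (T s) = -V s := by
    have := hTUV s
    unfold cross3 at this ⊢
    rw [← this, ← cross_anticomm]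
    rfl
  have key : cross3 (c⁻¹ • (x₂ s • V s - x₃ s • U s)) (T s)
      = c⁻¹ • (x₂ s • U s + x₃ s • V s) := by
    have h1 := hVTU s
    unfold cross3 at h1 hUT ⊢
    have : WithLp.toLp 2 ((crossProduct (c⁻¹ • (x₂ s • V s - x₃ s • U s)).ofLp) (T s).ofLp)
        = c⁻¹ • (x₂ s • WithLp.toLp 2 (crossProduct (V s).ofLp (T s).ofLp)
          - x₃ s • WithLp.toLp 2 (crossProduct (U s).ofLp (T s).ofLp)) := by
      simp only [WithLp.ofLp_smul, WithLp.ofLp_sub, map_smul, map_sub, LinearMap.smul_apply,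
        LinearMap.sub_apply, WithLp.toLp_smul, WithLp.toLp_sub]
    rw [this, h1, hUT]
    module
  have hUU : ⟪U s, U s⟫ = 1 := by
    rw [real_inner_self_eq_norm_sq, hUnorm]; norm_num
  have hVV : ⟪V s, V s⟫ = 1 := by
    rw [real_inner_self_eq_norm_sq, hVnorm]; norm_num
  have hVU : ⟪V s, U s⟫ = 0 := by rw [real_inner_comm]; exact hUV s
  have hkg' : kg = c⁻¹ * (κ s * (x₂ s * Real.cos (θ s) - x₃ s * Real.sin (θ s))) := by
    rw [hkg, key, hT' s]
    simp only [inner_smul_left, inner_smul_right, inner_sub_right, inner_add_left,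
      hUU, hVV, hUV s, hVU, starRingEnd_apply, star_trivial]
    push_cast
    ring
  have hk0 : kg = 0 ↔ x₂ s * Real.cos (θ s) = x₃ s * Real.sin (θ s) := by
    rw [hkg']
    constructor
    · intro h
      have hc' : c⁻¹ ≠ 0 := inv_ne_zero hcpos.ne'
      have hκ' : κ s ≠ 0 := (hκpos s).ne'
      have := mul_eq_zero.mp h
      rcases this with h | h
      · exact absurd h hc'
      · rcases mul_eq_zero.mp h with h | h
        · exact absurd h hκ'
        · linarith
    · intro h
      rw [show x₂ s * Real.cos (θ s) - x₃ s * Real.sin (θ s) = 0 by linarith]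
      ring
  refine ⟨hk0, fun hx3 hcos => ?_⟩
  rw [hk0, Real.tan_eq_sin_div_cos]
  rw [div_eq_div_iff hcos hx3]
  constructor <;> intro h <;> linarith
end

section
/- (Theorem 2) Fix s with x₂(s)² + x₃(s)² ≠ 0 and let N̄(s) = (x₂(s)V(s) − x₃(s)U(s))/√(x₂(s)² + x₃(s)²) and k_n(s) = ⟪r''(s), N̄(s)⟫. Then k_n(s) = 0 if and only if x₃(s)cos θ(s) + x₂(s)sin θ(s) = 0; in particular, if x₂(s) ≠ 0 and cos θ(s) ≠ 0, then the base curve has vanishing normal curvature at s if and only if tan θ(s) = −x₃(s)/x₂(s). -/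
open Real
open scoped RealInnerProductSpace

theorem rmf_asymptotic_iff
    (r T U V : ℝ → EuclideanSpace ℝ (Fin 3)) (κ θ x₁ x₂ x₃ : ℝ → ℝ)
    (hr : ContDiff ℝ (⊤ : ℕ∞) r) (hκsm : ContDiff ℝ (⊤ : ℕ∞) κ) (hθsm : ContDiff ℝ (⊤ : ℕ∞) θ)
    (hTsm : ContDiff ℝ (⊤ : ℕ∞) T) (hUsm : ContDiff ℝ (⊤ : ℕ∞) U) (hVsm : ContDiff ℝ (⊤ : ℕ∞) V)
    (hx₁sm : ContDiff ℝ (⊤ : ℕ∞) x₁) (hx₂sm : ContDiff ℝ (⊤ : ℕ∞) x₂) (hx₃sm : ContDiff ℝ (⊤ : ℕ∞) x₃)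
    (hκpos : ∀ s, 0 < κ s)
    (hunit : ∀ s, ‖deriv r s‖ = 1)
    (hT : ∀ s, T s = deriv r s)
    (hTnorm : ∀ s, ‖T s‖ = 1) (hUnorm : ∀ s, ‖U s‖ = 1) (hVnorm : ∀ s, ‖V s‖ = 1)
    (hTU : ∀ s, ⟪T s, U s⟫ = 0) (hTV : ∀ s, ⟪T s, V s⟫ = 0) (hUV : ∀ s, ⟪U s, V s⟫ = 0)
    (hTUV : ∀ s, cross3 (T s) (U s) = V s)
    (hUVT : ∀ s, cross3 (U s) (V s) = T s)
    (hVTU : ∀ s, cross3 (V s) (T s) = U s)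
    (hT' : ∀ s, deriv T s = (κ s * Real.cos (θ s)) • U s - (κ s * Real.sin (θ s)) • V s)
    (hU' : ∀ s, deriv U s = (-(κ s * Real.cos (θ s))) • T s)
    (hV' : ∀ s, deriv V s = (κ s * Real.sin (θ s)) • T s)
    (X : ℝ → EuclideanSpace ℝ (Fin 3))
    (hX : ∀ s, X s = x₁ s • T s + x₂ s • U s + x₃ s • V s)
    (s : ℝ) (hne : x₂ s ^ 2 + x₃ s ^ 2 ≠ 0)
    (kn : ℝ)
    (hkn : kn = ⟪deriv (deriv r) s,
      (Real.sqrt (x₂ s ^ 2 + x₃ s ^ 2))⁻¹ • (x₂ s • V s - x₃ s • U s)⟫)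
    : (kn = 0 ↔ x₃ s * Real.cos (θ s) + x₂ s * Real.sin (θ s) = 0)
      ∧ (x₂ s ≠ 0 → Real.cos (θ s) ≠ 0 →
        (kn = 0 ↔ Real.tan (θ s) = -(x₃ s) / x₂ s)) := by
  have hTr : T = deriv r := funext hT
  have hkn' : kn = -(Real.sqrt (x₂ s ^ 2 + x₃ s ^ 2))⁻¹ * (κ s * (x₃ s * Real.cos (θ s) + x₂ s * Real.sin (θ s))) := by
    rw [hkn, ← hTr, hT' s]
    rw [real_inner_smul_right, inner_sub_left, inner_sub_right, inner_sub_right]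
    rw [real_inner_smul_left, real_inner_smul_left, real_inner_smul_left, real_inner_smul_left,
      real_inner_smul_right, real_inner_smul_right, real_inner_smul_right, real_inner_smul_right]
    have h1 : ⟪U s, V s⟫ = 0 := hUV s
    have h2 : ⟪V s, U s⟫ = 0 := by rw [real_inner_comm]; exact hUV s
    have h3 : ⟪U s, U s⟫ = 1 := by
      rw [real_inner_self_eq_norm_sq, hUnorm s]; norm_num
    have h4 : ⟪V s, V s⟫ = 1 := by
      rw [real_inner_self_eq_norm_sq, hVnorm s]; norm_num
    rw [h1, h2, h3, h4]
    ring
  have hsq : 0 < Real.sqrt (x₂ s ^ 2 + x₃ s ^ 2) := by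
    apply Real.sqrt_pos.mpr
    rcases lt_or_eq_of_le (by positivity : (0:ℝ) ≤ x₂ s ^ 2 + x₃ s ^ 2) with h | h
    · exact h
    · exact absurd h.symm hne
  have hκ := hκpos s
  have key : kn = 0 ↔ x₃ s * Real.cos (θ s) + x₂ s * Real.sin (θ s) = 0 := by
    rw [hkn']
    constructor
    · intro h
      have := mul_eq_zero.mp h
      rcases this with h | h
      · exfalso; have : (Real.sqrt (x₂ s ^ 2 + x₃ s ^ 2))⁻¹ ≠ 0 := inv_ne_zero (ne_of_gt hsq)
        simp [this] at h
      · rcases mul_eq_zero.mp h with h | h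
        · exact absurd h (ne_of_gt hκ)
        · exact h
    · intro h; rw [h]; ring
  refine ⟨key, fun hx2 hcos => key.trans ?_⟩
  rw [Real.tan_eq_sin_div_cos]
  rw [div_eq_div_iff hcos hx2]
  constructor
  · intro h; linarith
  · intro h; linarith
end

section
/- (Case X ∈ span{T,U}) Suppose x₃ ≡ 0, so X(s) = x₁(s)T(s) + x₂(s)U(s). Then for every s, det(r'(s), X(s), X'(s)) = −κ(s)x₁(s)x₂(s)sin θ(s); moreover, if the derivative X'(s) is nonzero, the distribution parameter P(s) = det(r'(s), X(s), X'(s))/‖X'(s)‖² equals −κ(s)x₁(s)x₂(s)sin θ(s) / [(x₁'(s) − κ(s)x₂(s)cos θ(s))² + (x₂'(s) + κ(s)x₁(s)cos θ(s))² + (κ(s)x₁(s)sin θ(s))²]. -/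
open Real
open scoped RealInnerProductSpace

theorem rmf_span_TU_distribution
    (r T U V : ℝ → EuclideanSpace ℝ (Fin 3)) (κ θ x₁ x₂ x₃ : ℝ → ℝ)
    (hr : ContDiff ℝ (⊤ : ℕ∞) r) (hκsm : ContDiff ℝ (⊤ : ℕ∞) κ) (hθsm : ContDiff ℝ (⊤ : ℕ∞) θ)
    (hTsm : ContDiff ℝ (⊤ : ℕ∞) T) (hUsm : ContDiff ℝ (⊤ : ℕ∞) U) (hVsm : ContDiff ℝ (⊤ : ℕ∞) V)
    (hx₁sm : ContDiff ℝ (⊤ : ℕ∞) x₁) (hx₂sm : ContDiff ℝ (⊤ : ℕ∞) x₂) (hx₃sm : ContDiff ℝ (⊤ : ℕ∞) x₃)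
    (hκpos : ∀ s, 0 < κ s)
    (hunit : ∀ s, ‖deriv r s‖ = 1)
    (hT : ∀ s, T s = deriv r s)
    (hTnorm : ∀ s, ‖T s‖ = 1) (hUnorm : ∀ s, ‖U s‖ = 1) (hVnorm : ∀ s, ‖V s‖ = 1)
    (hTU : ∀ s, ⟪T s, U s⟫ = 0) (hTV : ∀ s, ⟪T s, V s⟫ = 0) (hUV : ∀ s, ⟪U s, V s⟫ = 0)
    (hTUV : ∀ s, cross3 (T s) (U s) = V s)
    (hUVT : ∀ s, cross3 (U s) (V s) = T s)
    (hVTU : ∀ s, cross3 (V s) (T s) = U s)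
    (hT' : ∀ s, deriv T s = (κ s * Real.cos (θ s)) • U s - (κ s * Real.sin (θ s)) • V s)
    (hU' : ∀ s, deriv U s = (-(κ s * Real.cos (θ s))) • T s)
    (hV' : ∀ s, deriv V s = (κ s * Real.sin (θ s)) • T s)
    (X : ℝ → EuclideanSpace ℝ (Fin 3))
    (hX : ∀ s, X s = x₁ s • T s + x₂ s • U s + x₃ s • V s)
    (hx3 : ∀ s, x₃ s = 0)
    : ∀ s : ℝ, ⟪cross3 (deriv r s) (X s), deriv X s⟫ = -(κ s * x₁ s * x₂ s * Real.sin (θ s))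
      ∧ (deriv X s ≠ 0 →
        ⟪cross3 (deriv r s) (X s), deriv X s⟫ / ‖deriv X s‖ ^ 2
          = -(κ s * x₁ s * x₂ s * Real.sin (θ s))
            / ((deriv x₁ s - κ s * x₂ s * Real.cos (θ s)) ^ 2
              + (deriv x₂ s + κ s * x₁ s * Real.cos (θ s)) ^ 2
              + (κ s * x₁ s * Real.sin (θ s)) ^ 2)) := by

  intro s
  -- notation
  set a := deriv x₁ s - κ s * x₂ s * Real.cos (θ s) with ha
  set b := deriv x₂ s + κ s * x₁ s * Real.cos (θ s) with hb
  set c := -(κ s * x₁ s * Real.sin (θ s)) with hc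
  have hx3fun : x₃ = fun _ => (0 : ℝ) := funext hx3
  have hdx3 : deriv x₃ s = 0 := by rw [hx3fun]; simp
  -- derivative of X
  have h1 : HasDerivAt x₁ (deriv x₁ s) s := (hx₁sm.differentiable (by simp) s).hasDerivAt
  have h2 : HasDerivAt x₂ (deriv x₂ s) s := (hx₂sm.differentiable (by simp) s).hasDerivAt
  have h3 : HasDerivAt x₃ (deriv x₃ s) s := (hx₃sm.differentiable (by simp) s).hasDerivAt
  have hT1 : HasDerivAt T (deriv T s) s := (hTsm.differentiable (by simp) s).hasDerivAt
  have hU1 : HasDerivAt U (deriv U s) s := (hUsm.differentiable (by simp) s).hasDerivAt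
  have hV1 : HasDerivAt V (deriv V s) s := (hVsm.differentiable (by simp) s).hasDerivAt
  have hXfun : X = fun t => x₁ t • T t + x₂ t • U t + x₃ t • V t := funext hX
  have hXd : HasDerivAt X
      ((x₁ s • deriv T s + deriv x₁ s • T s) + (x₂ s • deriv U s + deriv x₂ s • U s)
        + (x₃ s • deriv V s + deriv x₃ s • V s)) s := by
    rw [hXfun]
    exact ((h1.smul hT1).add (h2.smul hU1)).add (h3.smul hV1)
  have hdX : deriv X s = a • T s + b • U s + c • V s := by
    rw [hXd.deriv, hT' s, hU' s, hV' s, hx3 s, hdx3, ha, hb, hc]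
    simp only [smul_sub, smul_smul, zero_smul, zero_add, add_zero, smul_add]
    module
  have hVT : ⟪V s, T s⟫ = 0 := by rw [real_inner_comm]; exact hTV s
  have hVU : ⟪V s, U s⟫ = 0 := by rw [real_inner_comm]; exact hUV s
  have hUT : ⟪U s, T s⟫ = 0 := by rw [real_inner_comm]; exact hTU s
  have hTT : ⟪T s, T s⟫ = 1 := by
    rw [real_inner_self_eq_norm_sq, hTnorm s]; norm_num
  have hUU : ⟪U s, U s⟫ = 1 := by
    rw [real_inner_self_eq_norm_sq, hUnorm s]; norm_num
  have hVV : ⟪V s, V s⟫ = 1 := by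
    rw [real_inner_self_eq_norm_sq, hVnorm s]; norm_num
  -- the cross product
  have hcross : cross3 (deriv r s) (X s) = x₂ s • V s := by
    rw [← hT s, hX s, hx3 s, zero_smul, add_zero]
    show WithLp.toLp 2 (crossProduct (T s).ofLp (x₁ s • T s + x₂ s • U s).ofLp) = x₂ s • V s
    rw [WithLp.ofLp_add, WithLp.ofLp_smul, WithLp.ofLp_smul, map_add, map_smul, map_smul]
    have : crossProduct (T s).ofLp (T s).ofLp = 0 := cross_self _
    rw [this, smul_zero, zero_add, ← hTUV s]
    rfl
  have hinner : ⟪cross3 (deriv r s) (X s), deriv X s⟫ = x₂ s * c := by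
    rw [hcross, hdX]
    simp only [inner_add_right, real_inner_smul_left, real_inner_smul_right, hVT, hVU, hVV]
    ring
  have key : ⟪cross3 (deriv r s) (X s), deriv X s⟫
      = -(κ s * x₁ s * x₂ s * Real.sin (θ s)) := by
    rw [hinner, hc]; ring
  refine ⟨key, fun _ => ?_⟩
  have hnorm : ‖deriv X s‖ ^ 2 = a ^ 2 + b ^ 2 + c ^ 2 := by
    rw [← real_inner_self_eq_norm_sq, hdX]
    simp only [inner_add_right, inner_add_left, real_inner_smul_left, real_inner_smul_right,
      hVT, hVU, hVV, hUT, hUU, hTT, hTU s, hTV s, hUV s]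
    ring
  rw [key, hnorm]
  have : c ^ 2 = (κ s * x₁ s * Real.sin (θ s)) ^ 2 := by rw [hc]; ring
  rw [this]
end

section
/- (Corollary 7) Suppose x₃ ≡ 0, so X(s) = x₁(s)T(s) + x₂(s)U(s), and suppose κ(s)x₁(s)x₂(s) ≠ 0 for all s. Then the ruled surface φ(s,v) = r(s) + v·X(s) is developable (i.e., det(r'(s), X(s), X'(s)) = 0 for all s) if and only if sin θ(s) = 0 for all s, i.e., θ(s) is an integer multiple of π for every s. -/
open Real
open scoped RealInnerProductSpace

theorem rmf_span_TU_developable_iff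
    (r T U V : ℝ → EuclideanSpace ℝ (Fin 3)) (κ θ x₁ x₂ x₃ : ℝ → ℝ)
    (hr : ContDiff ℝ (⊤ : ℕ∞) r) (hκsm : ContDiff ℝ (⊤ : ℕ∞) κ) (hθsm : ContDiff ℝ (⊤ : ℕ∞) θ)
    (hTsm : ContDiff ℝ (⊤ : ℕ∞) T) (hUsm : ContDiff ℝ (⊤ : ℕ∞) U) (hVsm : ContDiff ℝ (⊤ : ℕ∞) V)
    (hx₁sm : ContDiff ℝ (⊤ : ℕ∞) x₁) (hx₂sm : ContDiff ℝ (⊤ : ℕ∞) x₂) (hx₃sm : ContDiff ℝ (⊤ : ℕ∞) x₃)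
    (hκpos : ∀ s, 0 < κ s)
    (hunit : ∀ s, ‖deriv r s‖ = 1)
    (hT : ∀ s, T s = deriv r s)
    (hTnorm : ∀ s, ‖T s‖ = 1) (hUnorm : ∀ s, ‖U s‖ = 1) (hVnorm : ∀ s, ‖V s‖ = 1)
    (hTU : ∀ s, ⟪T s, U s⟫ = 0) (hTV : ∀ s, ⟪T s, V s⟫ = 0) (hUV : ∀ s, ⟪U s, V s⟫ = 0)
    (hTUV : ∀ s, cross3 (T s) (U s) = V s)
    (hUVT : ∀ s, cross3 (U s) (V s) = T s)
    (hVTU : ∀ s, cross3 (V s) (T s) = U s)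
    (hT' : ∀ s, deriv T s = (κ s * Real.cos (θ s)) • U s - (κ s * Real.sin (θ s)) • V s)
    (hU' : ∀ s, deriv U s = (-(κ s * Real.cos (θ s))) • T s)
    (hV' : ∀ s, deriv V s = (κ s * Real.sin (θ s)) • T s)
    (X : ℝ → EuclideanSpace ℝ (Fin 3))
    (hX : ∀ s, X s = x₁ s • T s + x₂ s • U s + x₃ s • V s)
    (hx3 : ∀ s, x₃ s = 0)
    (hnz : ∀ s, κ s * x₁ s * x₂ s ≠ 0)
    : ((∀ s : ℝ, ⟪cross3 (deriv r s) (X s), deriv X s⟫ = 0) ↔ (∀ s : ℝ, Real.sin (θ s) = 0))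
      ∧ ((∀ s : ℝ, Real.sin (θ s) = 0) ↔ (∀ s : ℝ, ∃ k : ℤ, θ s = k * Real.pi)) := by
  have hXeq : X = fun s => x₁ s • T s + x₂ s • U s := by
    funext s; rw [hX s, hx3 s]; simp
  have key : ∀ s, ⟪cross3 (deriv r s) (X s), deriv X s⟫
      = -(κ s * x₁ s * x₂ s) * Real.sin (θ s) := by
    intro s
    have hTd : HasDerivAt T (deriv T s) s :=
      ((hTsm.differentiable (by simp)) s).hasDerivAt
    have hUd : HasDerivAt U (deriv U s) s :=
      ((hUsm.differentiable (by simp)) s).hasDerivAt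
    have h1 : HasDerivAt x₁ (deriv x₁ s) s :=
      ((hx₁sm.differentiable (by simp)) s).hasDerivAt
    have h2 : HasDerivAt x₂ (deriv x₂ s) s :=
      ((hx₂sm.differentiable (by simp)) s).hasDerivAt
    have hXd : HasDerivAt X
        ((x₁ s • deriv T s + deriv x₁ s • T s) +
         (x₂ s • deriv U s + deriv x₂ s • U s)) s := by
      rw [hXeq]
      exact (h1.smul hTd).add (h2.smul hUd)
    have hderivX : deriv X s = (x₁ s • deriv T s + deriv x₁ s • T s) +
         (x₂ s • deriv U s + deriv x₂ s • U s) := hXd.deriv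
    have hcross : cross3 (deriv r s) (X s) = x₂ s • V s := by
      rw [← hT s, hX s, hx3 s]
      show WithLp.toLp 2 (crossProduct (T s).ofLp (x₁ s • T s + x₂ s • U s + (0:ℝ) • V s).ofLp) = x₂ s • V s
      rw [zero_smul, add_zero, WithLp.ofLp_add, WithLp.ofLp_smul, WithLp.ofLp_smul, map_add, map_smul, map_smul]
      have : crossProduct (T s).ofLp (T s).ofLp = 0 := cross_self (T s).ofLp
      rw [this, smul_zero, zero_add, WithLp.toLp_smul]
      have := hTUV s
      rw [show cross3 (T s) (U s) = WithLp.toLp 2 (crossProduct (T s).ofLp (U s).ofLp) from rfl] at this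
      rw [this]
    have hVV : ⟪V s, V s⟫ = 1 := by
      rw [real_inner_self_eq_norm_sq, hVnorm s]; norm_num
    have hVT : ⟪V s, T s⟫ = 0 := by rw [real_inner_comm]; exact hTV s
    have hVU : ⟪V s, U s⟫ = 0 := by rw [real_inner_comm]; exact hUV s
    rw [hcross, hderivX, hT' s, hU' s]
    rw [real_inner_smul_left]
    rw [inner_add_right, inner_add_right, inner_add_right,
      real_inner_smul_right, real_inner_smul_right, real_inner_smul_right,
      real_inner_smul_right, inner_sub_right,
      real_inner_smul_right, real_inner_smul_right,
      real_inner_smul_right,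
      hVT, hVU, hVV]
    ring
  constructor
  · constructor
    · intro h s
      have := h s
      rw [key s] at this
      rcases mul_eq_zero.mp this with h' | h'
      · exact absurd (neg_eq_zero.mp h') (hnz s)
      · exact h'
    · intro h s; rw [key s, h s, mul_zero]
  · constructor
    · intro h s
      rcases Real.sin_eq_zero_iff.mp (h s) with ⟨k, hk⟩
      exact ⟨k, hk.symm⟩
    · intro h s
      rcases h s with ⟨k, hk⟩
      exact Real.sin_eq_zero_iff.mpr ⟨k, hk.symm⟩
end

section
/- (Case X ∈ span{T,V}) Suppose x₂ ≡ 0, so X(s) = x₁(s)T(s) + x₃(s)V(s). Then for every s, det(r'(s), X(s), X'(s)) = −κ(s)x₁(s)x₃(s)cos θ(s); moreover, if the derivative X'(s) is nonzero, the distribution parameter P(s) = det(r'(s), X(s), X'(s))/‖X'(s)‖² equals −κ(s)x₁(s)x₃(s)cos θ(s) / [(x₁'(s) + κ(s)x₃(s)sin θ(s))² + (κ(s)x₁(s)cos θ(s))² + (x₃'(s) − κ(s)x₁(s)sin θ(s))²]. -/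
open Real
open scoped RealInnerProductSpace

theorem rmf_span_TV_distribution
    (r T U V : ℝ → EuclideanSpace ℝ (Fin 3)) (κ θ x₁ x₂ x₃ : ℝ → ℝ)
    (hr : ContDiff ℝ (⊤ : ℕ∞) r) (hκsm : ContDiff ℝ (⊤ : ℕ∞) κ) (hθsm : ContDiff ℝ (⊤ : ℕ∞) θ)
    (hTsm : ContDiff ℝ (⊤ : ℕ∞) T) (hUsm : ContDiff ℝ (⊤ : ℕ∞) U) (hVsm : ContDiff ℝ (⊤ : ℕ∞) V)
    (hx₁sm : ContDiff ℝ (⊤ : ℕ∞) x₁) (hx₂sm : ContDiff ℝ (⊤ : ℕ∞) x₂) (hx₃sm : ContDiff ℝ (⊤ : ℕ∞) x₃)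
    (hκpos : ∀ s, 0 < κ s)
    (hunit : ∀ s, ‖deriv r s‖ = 1)
    (hT : ∀ s, T s = deriv r s)
    (hTnorm : ∀ s, ‖T s‖ = 1) (hUnorm : ∀ s, ‖U s‖ = 1) (hVnorm : ∀ s, ‖V s‖ = 1)
    (hTU : ∀ s, ⟪T s, U s⟫ = 0) (hTV : ∀ s, ⟪T s, V s⟫ = 0) (hUV : ∀ s, ⟪U s, V s⟫ = 0)
    (hTUV : ∀ s, cross3 (T s) (U s) = V s)
    (hUVT : ∀ s, cross3 (U s) (V s) = T s)
    (hVTU : ∀ s, cross3 (V s) (T s) = U s)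
    (hT' : ∀ s, deriv T s = (κ s * Real.cos (θ s)) • U s - (κ s * Real.sin (θ s)) • V s)
    (hU' : ∀ s, deriv U s = (-(κ s * Real.cos (θ s))) • T s)
    (hV' : ∀ s, deriv V s = (κ s * Real.sin (θ s)) • T s)
    (X : ℝ → EuclideanSpace ℝ (Fin 3))
    (hX : ∀ s, X s = x₁ s • T s + x₂ s • U s + x₃ s • V s)
    (hx2 : ∀ s, x₂ s = 0)
    : ∀ s : ℝ, ⟪cross3 (deriv r s) (X s), deriv X s⟫ = -(κ s * x₁ s * x₃ s * Real.cos (θ s))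
      ∧ (deriv X s ≠ 0 →
        ⟪cross3 (deriv r s) (X s), deriv X s⟫ / ‖deriv X s‖ ^ 2
          = -(κ s * x₁ s * x₃ s * Real.cos (θ s))
            / ((deriv x₁ s + κ s * x₃ s * Real.sin (θ s)) ^ 2
              + (κ s * x₁ s * Real.cos (θ s)) ^ 2
              + (deriv x₃ s - κ s * x₁ s * Real.sin (θ s)) ^ 2)) := by
  intro s
  have hx₂fun : x₂ = fun _ => (0 : ℝ) := funext hx2
  have hdx₂ : deriv x₂ s = 0 := by rw [hx₂fun]; simp
  -- inner products of the frame with itself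
  have hTT : ⟪T s, T s⟫ = 1 := by
    rw [real_inner_self_eq_norm_sq, hTnorm]; norm_num
  have hUU : ⟪U s, U s⟫ = 1 := by
    rw [real_inner_self_eq_norm_sq, hUnorm]; norm_num
  have hVV : ⟪V s, V s⟫ = 1 := by
    rw [real_inner_self_eq_norm_sq, hVnorm]; norm_num
  have hUT : ⟪U s, T s⟫ = 0 := by rw [real_inner_comm]; exact hTU s
  have hVT : ⟪V s, T s⟫ = 0 := by rw [real_inner_comm]; exact hTV s
  have hVU : ⟪V s, U s⟫ = 0 := by rw [real_inner_comm]; exact hUV s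
  set A := deriv x₁ s + κ s * x₃ s * Real.sin (θ s) with hA
  set B := κ s * x₁ s * Real.cos (θ s) with hB
  set C := deriv x₃ s - κ s * x₁ s * Real.sin (θ s) with hC
  -- derivative of X
  have hXfun : X = fun t => x₁ t • T t + x₂ t • U t + x₃ t • V t := funext hX
  have hdT : HasDerivAt T (deriv T s) s :=
    ((hTsm.differentiable (by simp)) s).hasDerivAt
  have hdU : HasDerivAt U (deriv U s) s :=
    ((hUsm.differentiable (by simp)) s).hasDerivAt
  have hdV : HasDerivAt V (deriv V s) s :=
    ((hVsm.differentiable (by simp)) s).hasDerivAt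
  have hd1 : HasDerivAt x₁ (deriv x₁ s) s :=
    ((hx₁sm.differentiable (by simp)) s).hasDerivAt
  have hd2 : HasDerivAt x₂ (deriv x₂ s) s :=
    ((hx₂sm.differentiable (by simp)) s).hasDerivAt
  have hd3 : HasDerivAt x₃ (deriv x₃ s) s :=
    ((hx₃sm.differentiable (by simp)) s).hasDerivAt
  have hdX : HasDerivAt X
      ((x₁ s • deriv T s + deriv x₁ s • T s) + (x₂ s • deriv U s + deriv x₂ s • U s)
        + (x₃ s • deriv V s + deriv x₃ s • V s)) s := by
    rw [hXfun]
    exact ((hd1.smul hdT).add (hd2.smul hdU)).add (hd3.smul hdV)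
  have hX' : deriv X s = A • T s + B • U s + C • V s := by
    rw [hdX.deriv, hT' s, hU' s, hV' s, hdx₂, hx2 s, hA, hB, hC]
    module
  -- the cross product
  have hcross : cross3 (deriv r s) (X s) = (-(x₃ s)) • U s := by
    rw [← hT s, hX s, hx2 s]
    show WithLp.toLp 2 (crossProduct (T s).ofLp (x₁ s • T s + (0:ℝ) • U s + x₃ s • V s).ofLp) = (-(x₃ s)) • U s
    have hTV3 : crossProduct (T s).ofLp (V s).ofLp = -(U s).ofLp := by
      have := cross_anticomm (V s).ofLp (T s).ofLp
      have h2 : crossProduct (V s).ofLp (T s).ofLp = (U s).ofLp := congrArg WithLp.ofLp (hVTU s)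
      rw [h2] at this
      exact this.symm
    simp [map_add, map_smul, cross_self, hTV3]
  constructor
  · rw [hcross, hX', real_inner_smul_left, inner_add_right, inner_add_right,
      real_inner_smul_right, real_inner_smul_right, real_inner_smul_right,
      hUT, hUU, hUV s]
    rw [hB]; ring
  · intro hne
    have hnorm : ‖deriv X s‖ ^ 2 = A ^ 2 + B ^ 2 + C ^ 2 := by
      rw [← real_inner_self_eq_norm_sq, hX']
      simp only [inner_add_left, inner_add_right, real_inner_smul_left,
        real_inner_smul_right, hTT, hUU, hVV, hTU s, hTV s, hUV s, hUT, hVT, hVU]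
      ring
    rw [hnorm, hcross, hX', real_inner_smul_left, inner_add_right, inner_add_right,
      real_inner_smul_right, real_inner_smul_right, real_inner_smul_right,
      hUT, hUU, hUV s, hB]
    ring_nf
end
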